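/- arXiv:2307.11579 — 2 statements merged into one kernel-verified Lean document; each statement's English description precedes it below -/
import Mathlib

section
/- For pairwise distinct α₁,...,α_m ∈ ℂ, the function g_m(x) = ∑_{j=1}^m e^{α_j x}/∏_{k≠j}(α_j − α_k) admits the power series expansion g_m(x) = ∑_{n ≥ m−1} h_{n−m+1}(α₁,...,α_m) x^n / n!, where h_d denotes the complete homogeneous symmetric polynomial of degree d. In particular g_m vanishes to order m−1 at x = 0. -/
open Finset

/-- The complete homogeneous symmetric polynomial `h_d(α₁,…,α_m)` evaluated at `α`. -/
noncomputable def completeHomog (m d : ℕ) (α : Fin m → ℂ) : ℂ :=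
  ∑ k ∈ (Fintype.piFinset fun _ : Fin m => Finset.range (d + 1)).filter
      (fun k => ∑ i, k i = d),
    ∏ i, α i ^ k i

/-! The Taylor coefficients of `g_m` are `S_n / n!` with `S_n = ∑_j α_j^n / ∏_{k≠j}(α_j − α_k)`,
the divided difference of `x^n` at the nodes `α`. For `n < m`, `S_n` is the coefficient of
`x^(m-1)` in the Lagrange interpolant of `x^n`, i.e. in `x^n` itself: `0` for `n < m - 1` and `1`
for `n = m - 1`. Beyond that, splitting off the node `α₁` gives
`S_{n+1}(α) = α₁ S_n(α) + S_n(α₂, …, α_m)`, the same recurrence as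
`h_{d+1}(α) = α₁ h_d(α) + h_{d+1}(α₂, …, α_m)`, so induction on `m` yields `S_n = h_{n-m+1}`. -/

open Polynomial

namespace Lagrange

variable {F ι : Type*} [Field F] [DecidableEq ι] {s : Finset ι} {v : ι → F} {i : ι}

theorem coeff_basis_card_sub_one (hi : i ∈ s) :
    (Lagrange.basis s v i).coeff (#s - 1) = nodalWeight s v i := by
  rw [basis_eq_prod_sub_inv_mul_nodal_div hi, ← nodal_erase_eq_nodal_div hi, coeff_C_mul,
    ← card_erase_of_mem hi, ← natDegree_nodal (s := s.erase i) (v := v),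
    nodal_monic.coeff_natDegree, mul_one]

theorem sum_nodalWeight_mul_eval (hvs : Set.InjOn v s) {p : F[X]} (hp : p.degree < #s) :
    ∑ i ∈ s, nodalWeight s v i * p.eval (v i) = p.coeff (#s - 1) := by
  conv_rhs => rw [eq_interpolate hvs hp]
  simp only [interpolate_apply, finsetSum_coeff, coeff_C_mul]
  exact sum_congr rfl fun i hi => by rw [coeff_basis_card_sub_one hi, mul_comm]

theorem sum_nodalWeight_mul_pow (hvs : Set.InjOn v s) {n : ℕ} (hn : n < #s) :
    ∑ i ∈ s, nodalWeight s v i * v i ^ n = if n + 1 = #s then 1 else 0 := by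
  have hdeg : (X ^ n : F[X]).degree < #s := by rw [degree_X_pow]; exact_mod_cast hn
  simpa [coeff_X_pow, eq_tsub_iff_add_eq_of_le (Nat.one_le_of_lt hn), eq_comm]
    using sum_nodalWeight_mul_eval hvs hdeg

theorem nodalWeight_insert {j : ι} (hi : i ∉ s) (hj : j ∈ s) :
    nodalWeight (insert i s) v j = nodalWeight s v j * (v j - v i)⁻¹ := by
  rw [nodalWeight, erase_insert_of_ne (ne_of_mem_of_not_mem hj hi).symm, prod_insert
    (fun h => hi (mem_of_mem_erase h)), mul_comm, nodalWeight]

theorem nodalWeight_map {κ : Type*} [DecidableEq κ] (e : κ ↪ ι) (s : Finset κ) (v : ι → F)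
    (i : κ) : nodalWeight (s.map e) v (e i) = nodalWeight s (v ∘ e) i := by
  rw [nodalWeight, ← map_erase, prod_map]
  rfl

theorem sum_nodalWeight_insert_mul_pow_succ (hi : i ∉ s) (hvs : Set.InjOn v ↑(insert i s))
    (n : ℕ) :
    ∑ j ∈ insert i s, nodalWeight (insert i s) v j * v j ^ (n + 1) =
      v i * ∑ j ∈ insert i s, nodalWeight (insert i s) v j * v j ^ n +
        ∑ j ∈ s, nodalWeight s v j * v j ^ n := by
  have hi_term : nodalWeight (insert i s) v i * v i ^ (n + 1) -
      v i * (nodalWeight (insert i s) v i * v i ^ n) = 0 := by ring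
  rw [← sub_eq_iff_eq_add', mul_sum, ← sum_sub_distrib, sum_insert hi, hi_term, zero_add]
  refine sum_congr rfl fun j hj => ?_
  have hji : v j - v i ≠ 0 := sub_ne_zero_of_ne fun h =>
    ne_of_mem_of_not_mem hj hi (hvs (mem_insert_of_mem hj) (mem_insert_self i s) h)
  rw [nodalWeight_insert hi hj]
  field_simp
  ring

end Lagrange

open Lagrange

theorem Fin.sum_nodalWeight_mul_pow_succ {F : Type*} [Field F] {m : ℕ} {α : Fin (m + 1) → F}
    (hα : Function.Injective α) (n : ℕ) :
    ∑ j, nodalWeight univ α j * α j ^ (n + 1) =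
      α 0 * ∑ j, nodalWeight univ α j * α j ^ n +
        ∑ j, nodalWeight univ (Fin.tail α) j * Fin.tail α j ^ n := by
  have huniv : (univ : Finset (Fin (m + 1))) = insert 0 (univ.map (Fin.succEmb m)) := by
    rw [Fin.univ_succ, cons_eq_insert]; rfl
  have h0 : (0 : Fin (m + 1)) ∉ univ.map (Fin.succEmb m) := by simp
  rw [huniv, sum_nodalWeight_insert_mul_pow_succ h0 (huniv ▸ hα.injOn), sum_map]
  simp only [nodalWeight_map]
  rfl

theorem completeHomog_eq_sum_antidiagonalTuple (m d : ℕ) (α : Fin m → ℂ) :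
    completeHomog m d α = ∑ k ∈ Nat.antidiagonalTuple m d, ∏ i, α i ^ k i := by
  refine sum_congr (ext fun k => ?_) fun _ _ => rfl
  simp only [mem_filter, Fintype.mem_piFinset, mem_range, Nat.mem_antidiagonalTuple,
    and_iff_right_iff_imp]
  rintro rfl i
  exact Nat.lt_succ_of_le (single_le_sum (fun _ _ => Nat.zero_le _) (mem_univ i))

theorem completeHomog_zero_right (m : ℕ) (α : Fin m → ℂ) : completeHomog m 0 α = 1 := by
  simp [completeHomog_eq_sum_antidiagonalTuple, Nat.antidiagonalTuple_zero_right]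

theorem completeHomog_zero_succ (d : ℕ) (α : Fin 0 → ℂ) : completeHomog 0 (d + 1) α = 0 := by
  simp [completeHomog_eq_sum_antidiagonalTuple]

theorem completeHomog_succ (m d : ℕ) (α : Fin (m + 1) → ℂ) :
    completeHomog (m + 1) d α =
      ∑ p ∈ antidiagonal d, α 0 ^ p.1 * completeHomog m p.2 (Fin.tail α) := by
  simp only [completeHomog_eq_sum_antidiagonalTuple, mul_sum, sum_sigma']
  refine sum_nbij' (fun k => ⟨(k 0, d - k 0), Fin.tail k⟩) (fun x => Fin.cons x.1.1 x.2)
    ?_ ?_ ?_ ?_ ?_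
  · intro k hk
    simp only [mem_sigma, HasAntidiagonal.mem_antidiagonal, Nat.mem_antidiagonalTuple,
      Fin.sum_univ_succ] at hk ⊢
    exact ⟨by omega, by rw [← hk, Nat.add_sub_cancel_left]; rfl⟩
  · intro x hx
    simp only [mem_sigma, HasAntidiagonal.mem_antidiagonal, Nat.mem_antidiagonalTuple,
      Fin.sum_univ_succ] at hx ⊢
    simp [hx.2, hx.1]
  · intro k _
    simp
  · intro x hx
    simp only [mem_sigma, HasAntidiagonal.mem_antidiagonal] at hx
    simp [← hx.1]
  · intro k _
    rw [Fin.prod_univ_succ]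
    rfl

theorem completeHomog_succ_succ (m d : ℕ) (α : Fin (m + 1) → ℂ) :
    completeHomog (m + 1) (d + 1) α =
      α 0 * completeHomog (m + 1) d α + completeHomog m (d + 1) (Fin.tail α) := by
  rw [completeHomog_succ, completeHomog_succ, Nat.sum_antidiagonal_succ, mul_sum, add_comm]
  simp [pow_succ, mul_assoc, mul_left_comm]

theorem sum_nodalWeight_mul_pow_eq_completeHomog {m n : ℕ} {α : Fin m → ℂ}
    (hα : Function.Injective α) (hmn : m ≤ n + 1) :
    ∑ j, nodalWeight univ α j * α j ^ n = completeHomog m (n + 1 - m) α := by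
  induction m generalizing n with
  | zero => simp [completeHomog_zero_succ]
  | succ m ih =>
    induction n, Nat.le_of_succ_le_succ hmn using Nat.le_induction with
    | base =>
      rw [sum_nodalWeight_mul_pow hα.injOn (by simp), if_pos (by simp), Nat.sub_self,
        completeHomog_zero_right]
    | succ n hmn' ihn =>
      have htail : Function.Injective (Fin.tail α) := hα.comp (Fin.succ_injective m)
      rw [Fin.sum_nodalWeight_mul_pow_succ hα, ihn (by omega), ih htail (by omega),
        show n + 1 + 1 - (m + 1) = n + 1 - (m + 1) + 1 by omega, completeHomog_succ_succ]
      congr 2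
      omega

theorem hasSum_sum_mul_cexp {ι : Type*} (s : Finset ι) (c a : ι → ℂ) (x : ℂ) :
    HasSum (fun n : ℕ => (∑ j ∈ s, c j * a j ^ n) * x ^ n / n.factorial)
      (∑ j ∈ s, c j * Complex.exp (a j * x)) := by
  rw [Complex.exp_eq_exp_ℂ]
  refine (hasSum_sum fun j _ =>
    ((NormedSpace.expSeries_div_hasSum_exp (a j * x)).mul_left (c j))).congr_fun fun n => ?_
  simp only [sum_mul, sum_div, mul_pow]
  exact sum_congr rfl fun j _ => by ring

theorem iteratedDeriv_sum_mul_cexp {ι : Type*} (s : Finset ι) (c a : ι → ℂ) (k : ℕ) :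
    iteratedDeriv k (fun x => ∑ j ∈ s, c j * Complex.exp (a j * x)) =
      fun x => ∑ j ∈ s, c j * (a j ^ k * Complex.exp (a j * x)) := by
  funext x
  rw [iteratedDeriv_fun_sum fun j _ => by fun_prop]
  simp

/-- For pairwise distinct `α`, `g_m(x) = ∑_j e^{α_j x}/∏_{k≠j}(α_j−α_k)` has the power
series expansion `∑_{n≥m−1} h_{n−m+1}(α) x^n/n!` (written with `n = d + m − 1`);
in particular `g_m` vanishes to order `m−1` at `0`. -/
theorem gracefulBasis_last_powerSeries (m : ℕ) (hm : 0 < m) (α : Fin m → ℂ)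
    (hα : Function.Injective α) (g : ℂ → ℂ)
    (hg : g = fun x => ∑ j : Fin m,
      Complex.exp (α j * x) / ∏ k ∈ (Finset.univ : Finset (Fin m)).erase j, (α j - α k)) :
    (∀ x : ℂ, HasSum
      (fun d : ℕ => completeHomog m d α * x ^ (d + m - 1) / (Nat.factorial (d + m - 1)))
      (g x)) ∧
    (∀ k : ℕ, k < m - 1 → iteratedDeriv k g 0 = 0) := by
  obtain rfl : g = fun x => ∑ j, nodalWeight univ α j * Complex.exp (α j * x) := by
    simp only [hg, nodalWeight, prod_inv_distrib, div_eq_inv_mul]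
  have hlow : ∀ n, n + 1 < m → ∑ j, nodalWeight univ α j * α j ^ n = 0 := fun n hn => by
    rw [sum_nodalWeight_mul_pow hα.injOn (by simp; omega), if_neg (by simp; omega)]
  refine ⟨fun x => ?_, fun k hk => ?_⟩
  · have h := hasSum_sum_mul_cexp univ (nodalWeight univ α) α x
    have hinit : ∑ n ∈ range (m - 1),
        (∑ j, nodalWeight univ α j * α j ^ n) * x ^ n / n.factorial = 0 :=
      sum_eq_zero fun n hn => by rw [hlow n (by simp at hn; omega), zero_mul, zero_div]
    rw [← hasSum_nat_add_iff' (m - 1), hinit, sub_zero] at h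
    refine h.congr_fun fun d => ?_
    rw [sum_nodalWeight_mul_pow_eq_completeHomog hα (by omega), Nat.add_sub_assoc hm,
      show d + (m - 1) + 1 - m = d by omega]
  · rw [iteratedDeriv_sum_mul_cexp]
    simpa using hlow k (by omega)
end

section
/- For distinct α₁,...,α_m ∈ ℂ and n ≥ 0, the sum ∑_{j=1}^m α_j^n / ∏_{k≠j}(α_j − α_k) equals the complete homogeneous symmetric polynomial h_{n−m+1}(α₁,...,α_m) (interpreted as 0 for n < m−1). -/
open Finset
open Polynomial

lemma ch_zero (d : ℕ) (α : Fin 0 → ℂ) : completeHomog 0 d α = if d = 0 then 1 else 0 := by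
  unfold completeHomog
  rcases Nat.eq_zero_or_pos d with h | h
  · subst h; simp
  · simp [Finset.filter_eq_empty_iff, h.ne, h.ne']

lemma ch_succ (m d : ℕ) (α : Fin (m+1) → ℂ) :
    completeHomog (m+1) d α =
      ∑ t ∈ Finset.range (d+1), α (Fin.last m) ^ t * completeHomog m (d - t) (α ∘ Fin.castSucc) := by
  unfold completeHomog
  simp_rw [Finset.mul_sum]
  rw [Finset.sum_sigma']
  apply Finset.sum_nbij' (i := fun k => ⟨k (Fin.last m), fun i => k (Fin.castSucc i)⟩)
    (j := fun p => Fin.snoc p.2 p.1)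
  · intro k hk
    simp only [Finset.mem_filter, Fintype.mem_piFinset, Finset.mem_range] at hk
    obtain ⟨h1, h2⟩ := hk
    rw [Fin.sum_univ_castSucc] at h2
    simp only [Finset.mem_sigma, Finset.mem_filter, Fintype.mem_piFinset, Finset.mem_range]
    refine ⟨by omega, fun i => ?_, by omega⟩
    have : k (Fin.castSucc i) ≤ ∑ j : Fin m, k (Fin.castSucc j) :=
      Finset.single_le_sum (f := fun j : Fin m => k (Fin.castSucc j))
        (fun j _ => Nat.zero_le _) (Finset.mem_univ i)
    omega
  · intro p hp
    simp only [Finset.mem_sigma, Finset.mem_filter, Fintype.mem_piFinset, Finset.mem_range] at hp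
    obtain ⟨h1, h2, h3⟩ := hp
    simp only [Finset.mem_filter, Fintype.mem_piFinset, Finset.mem_range]
    constructor
    · intro i
      induction i using Fin.lastCases
      · simpa using h1
      · simp only [Fin.snoc_castSucc]
        have := h2 ‹_›
        omega
    · rw [Fin.sum_univ_castSucc]
      simp only [Fin.snoc_castSucc, Fin.snoc_last]
      omega
  · intro k hk
    funext i
    induction i using Fin.lastCases <;> simp
  · intro p hp
    simp
  · intro k hk
    simp only [Finset.mem_filter, Fintype.mem_piFinset, Finset.mem_range] at hk
    rw [Fin.prod_univ_castSucc]
    simp [mul_comm]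

lemma ch_one (d : ℕ) (α : Fin 1 → ℂ) : completeHomog 1 d α = α 0 ^ d := by
  rw [ch_succ]
  have : ∀ t ∈ Finset.range (d+1),
      α (Fin.last 0) ^ t * completeHomog 0 (d - t) (α ∘ Fin.castSucc) =
        if t = d then α 0 ^ d else 0 := by
    intro t ht
    rw [Finset.mem_range] at ht
    rw [ch_zero]
    rcases eq_or_ne t d with rfl | h
    · simp [Fin.last]
    · have : d - t ≠ 0 := by omega
      simp [this, h]
  rw [Finset.sum_congr rfl this, Finset.sum_ite_eq' (Finset.range (d+1)) d]
  simp

lemma leadingCoeff_lagrange_basis {m : ℕ} (α : Fin m → ℂ) (hα : Function.Injective α) (j : Fin m) :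
    (Lagrange.basis Finset.univ α j).leadingCoeff = ∏ k ∈ Finset.univ.erase j, (α j - α k)⁻¹ := by
  unfold Lagrange.basis
  rw [Polynomial.leadingCoeff_prod]
  apply Finset.prod_congr rfl
  intro k hk
  rw [Lagrange.basisDivisor, Polynomial.leadingCoeff_mul, Polynomial.leadingCoeff_C,
    Polynomial.leadingCoeff_X_sub_C, mul_one]

lemma sum_inv_vandermonde {m : ℕ} (hm : 2 ≤ m) (α : Fin m → ℂ) (hα : Function.Injective α) :
    ∑ j : Fin m, (∏ k ∈ Finset.univ.erase j, (α j - α k))⁻¹ = 0 := by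
  have hinj : Set.InjOn α ↑(Finset.univ : Finset (Fin m)) := hα.injOn
  have hne : (Finset.univ : Finset (Fin m)).Nonempty := ⟨⟨0, by omega⟩, Finset.mem_univ _⟩
  have hsum := Lagrange.sum_basis hinj hne
  have hcoeff := congrArg (fun p => Polynomial.coeff p (m - 1)) hsum
  simp only [Polynomial.finset_sum_coeff] at hcoeff
  have hcoeff1 : (1 : ℂ[X]).coeff (m-1) = 0 := by
    rw [Polynomial.coeff_one]
    simp; omega
  rw [hcoeff1] at hcoeff
  rw [← hcoeff]
  apply Finset.sum_congr rfl
  intro j _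
  have hdeg : (Lagrange.basis Finset.univ α j).natDegree = m - 1 := by
    rw [Lagrange.natDegree_basis hinj (Finset.mem_univ j), Finset.card_univ, Fintype.card_fin]
  rw [← hdeg, ← Polynomial.leadingCoeff, leadingCoeff_lagrange_basis α hα j,
    ← Finset.prod_inv_distrib]

lemma erase_univ_castSucc {m : ℕ} (i : Fin m) :
    (Finset.univ : Finset (Fin (m+1))).erase (Fin.castSucc i) =
      insert (Fin.last m) ((Finset.univ.erase i).image Fin.castSucc) := by
  ext k
  simp only [Finset.mem_erase, Finset.mem_univ, and_true, Finset.mem_insert, Finset.mem_image]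
  constructor
  · intro hk
    induction k using Fin.lastCases with
    | last => exact Or.inl rfl
    | cast k => exact Or.inr ⟨k, fun h => hk (by rw [h]), rfl⟩
  · rintro (rfl | ⟨k', hk', rfl⟩)
    · exact (Fin.castSucc_lt_last i).ne'
    · exact fun h => hk' (Fin.castSucc_injective m h)

lemma prod_erase_castSucc {m : ℕ} (f : Fin (m+1) → ℂ) (i : Fin m) :
    ∏ k ∈ Finset.univ.erase (Fin.castSucc i), f k =
      (∏ k ∈ Finset.univ.erase i, f (Fin.castSucc k)) * f (Fin.last m) := by
  rw [erase_univ_castSucc, Finset.prod_insert, Finset.prod_image, mul_comm]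
  · intro a _ b _ h; exact Fin.castSucc_injective m h
  · simp only [Finset.mem_image]
    rintro ⟨k', _, hk'⟩
    exact (Fin.castSucc_lt_last k').ne hk'

lemma erase_univ_last {m : ℕ} :
    (Finset.univ : Finset (Fin (m+1))).erase (Fin.last m) = Finset.univ.image Fin.castSucc := by
  ext k
  simp only [Finset.mem_erase, Finset.mem_univ, and_true, Finset.mem_image]
  constructor
  · intro hk
    induction k using Fin.lastCases with
    | last => exact absurd rfl hk
    | cast k => exact ⟨k, trivial, rfl⟩
  · rintro ⟨k', -, rfl⟩
    exact (Fin.castSucc_lt_last k').ne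

lemma prod_erase_last {m : ℕ} (f : Fin (m+1) → ℂ) :
    ∏ k ∈ Finset.univ.erase (Fin.last m), f k = ∏ k : Fin m, f (Fin.castSucc k) := by
  rw [erase_univ_last, Finset.prod_image]
  intro a _ b _ h; exact Fin.castSucc_injective m h

lemma main_aux : ∀ (m : ℕ), 0 < m → ∀ (α : Fin m → ℂ), Function.Injective α → ∀ n : ℕ,
    ∑ j : Fin m, α j ^ n / ∏ k ∈ (Finset.univ : Finset (Fin m)).erase j, (α j - α k) =
      if n < m - 1 then 0 else completeHomog m (n - (m - 1)) α := by
  intro m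
  induction m with
  | zero => omega
  | succ m ih =>
    intro _ α hα n
    rcases Nat.eq_zero_or_pos m with rfl | hm
    · -- base case m = 1
      rw [Fin.sum_univ_one]
      have he : (Finset.univ : Finset (Fin 1)).erase 0 = ∅ := by decide
      rw [he, Finset.prod_empty, div_one, ch_one]
      simp
    · -- inductive step
      have hβ : Function.Injective (fun i : Fin m => α (Fin.castSucc i)) :=
        fun a b h => Fin.castSucc_injective m (hα h)
      have hCne : ∀ i : Fin m,
          (∏ k ∈ Finset.univ.erase i, (α (Fin.castSucc i) - α (Fin.castSucc k))) ≠ 0 := by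
        intro i
        rw [Finset.prod_ne_zero_iff]
        intro k hk
        exact sub_ne_zero.mpr (fun h => (Finset.mem_erase.mp hk).1 (hβ h).symm)
      have hLne : ∀ i : Fin m, α (Fin.castSucc i) - α (Fin.last m) ≠ 0 := fun i =>
        sub_ne_zero.mpr (fun h => (Fin.castSucc_lt_last i).ne (hα h))
      -- zero lemma specialized
      have hzero : ∑ i : Fin m,
            ((∏ k ∈ Finset.univ.erase i, (α (Fin.castSucc i) - α (Fin.castSucc k))) *
              (α (Fin.castSucc i) - α (Fin.last m)))⁻¹ +
          (∏ k : Fin m, (α (Fin.last m) - α (Fin.castSucc k)))⁻¹ = 0 := by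
        have h0 := sum_inv_vandermonde (by omega) α hα
        rw [Fin.sum_univ_castSucc] at h0
        rw [prod_erase_last (fun k => α (Fin.last m) - α k)] at h0
        have : ∀ i : Fin m, (∏ k ∈ Finset.univ.erase (Fin.castSucc i), (α (Fin.castSucc i) - α k))
            = (∏ k ∈ Finset.univ.erase i, (α (Fin.castSucc i) - α (Fin.castSucc k))) *
              (α (Fin.castSucc i) - α (Fin.last m)) := fun i =>
          prod_erase_castSucc (fun k => α (Fin.castSucc i) - α k) i
        simp_rw [this] at h0
        exact h0
      -- decompose LHS
      rw [Fin.sum_univ_castSucc]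
      rw [prod_erase_last (fun k => α (Fin.last m) - α k)]
      have hrw : ∀ i : Fin m,
          α (Fin.castSucc i) ^ n / ∏ k ∈ Finset.univ.erase (Fin.castSucc i), (α (Fin.castSucc i) - α k)
            = (∑ t ∈ Finset.range n, α (Fin.castSucc i) ^ t * α (Fin.last m) ^ (n - 1 - t)) /
                (∏ k ∈ Finset.univ.erase i, (α (Fin.castSucc i) - α (Fin.castSucc k)))
              + α (Fin.last m) ^ n /
                ((∏ k ∈ Finset.univ.erase i, (α (Fin.castSucc i) - α (Fin.castSucc k))) *
                  (α (Fin.castSucc i) - α (Fin.last m))) := by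
        intro i
        rw [prod_erase_castSucc (fun k => α (Fin.castSucc i) - α k) i]
        have hg := geom_sum₂_mul (α (Fin.castSucc i)) (α (Fin.last m)) n
        have hx : α (Fin.castSucc i) ^ n =
            (∑ t ∈ Finset.range n, α (Fin.castSucc i) ^ t * α (Fin.last m) ^ (n - 1 - t)) *
              (α (Fin.castSucc i) - α (Fin.last m)) + α (Fin.last m) ^ n := by
          linear_combination -hg
        rw [hx, add_div]
        congr 1
        rw [mul_comm (∏ k ∈ Finset.univ.erase i, (α (Fin.castSucc i) - α (Fin.castSucc k)))
          (α (Fin.castSucc i) - α (Fin.last m))]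
        rw [mul_comm (∑ t ∈ Finset.range n, α (Fin.castSucc i) ^ t * α (Fin.last m) ^ (n - 1 - t))
          (α (Fin.castSucc i) - α (Fin.last m))]
        exact mul_div_mul_left _ _ (hLne i)
      rw [Finset.sum_congr rfl (fun i _ => hrw i), Finset.sum_add_distrib]
      -- the second part vanishes against the last term
      have hvanish : (∑ i : Fin m, α (Fin.last m) ^ n /
            ((∏ k ∈ Finset.univ.erase i, (α (Fin.castSucc i) - α (Fin.castSucc k))) *
              (α (Fin.castSucc i) - α (Fin.last m))))
          + α (Fin.last m) ^ n / ∏ k : Fin m, (α (Fin.last m) - α (Fin.castSucc k)) = 0 := by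
        simp_rw [div_eq_mul_inv, ← Finset.mul_sum, ← mul_add, hzero, mul_zero]
      rw [add_assoc, hvanish, add_zero]
      -- swap the sums
      have hswap : ∑ i : Fin m,
          (∑ t ∈ Finset.range n, α (Fin.castSucc i) ^ t * α (Fin.last m) ^ (n - 1 - t)) /
            (∏ k ∈ Finset.univ.erase i, (α (Fin.castSucc i) - α (Fin.castSucc k)))
          = ∑ t ∈ Finset.range n, α (Fin.last m) ^ (n - 1 - t) *
              ∑ i : Fin m, α (Fin.castSucc i) ^ t /
                (∏ k ∈ Finset.univ.erase i, (α (Fin.castSucc i) - α (Fin.castSucc k))) := by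
        simp_rw [Finset.sum_div, Finset.mul_sum]
        rw [Finset.sum_comm]
        apply Finset.sum_congr rfl
        intro i _
        apply Finset.sum_congr rfl
        intro t _
        ring
      rw [hswap]
      -- apply induction hypothesis
      have hIH : ∀ t : ℕ, ∑ i : Fin m, α (Fin.castSucc i) ^ t /
            (∏ k ∈ Finset.univ.erase i, (α (Fin.castSucc i) - α (Fin.castSucc k)))
          = if t < m - 1 then 0 else completeHomog m (t - (m - 1)) (α ∘ Fin.castSucc) := by
        intro t
        exact ih hm (α ∘ Fin.castSucc) hβ t
      simp_rw [hIH]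
      -- final combinatorial evaluation
      rcases lt_or_ge n m with hn | hn
      · -- n < m : everything vanishes
        rw [if_pos (by omega : n < m + 1 - 1)]
        apply Finset.sum_eq_zero
        intro t ht
        rw [Finset.mem_range] at ht
        rw [if_pos (by omega), mul_zero]
      · rw [if_neg (by omega : ¬ n < m + 1 - 1)]
        have hsub : (Finset.Ico (m-1) n) ⊆ Finset.range n := by
          intro t ht
          rw [Finset.mem_Ico] at ht
          exact Finset.mem_range.mpr ht.2
        rw [← Finset.sum_subset hsub (fun t ht hnt => by
          rw [Finset.mem_range] at ht
          rw [Finset.mem_Ico] at hnt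
          rw [if_pos (by omega), mul_zero])]
        rw [Finset.sum_Ico_eq_sum_range]
        have hlen : n - (m - 1) = n - m + 1 := by omega
        rw [hlen]
        rw [ch_succ]
        have hd : n - (m + 1 - 1) = n - m := by omega
        rw [hd]
        have hr := Finset.sum_range_reflect (fun t => α (Fin.last m) ^ t *
          completeHomog m (n - m - t) (α ∘ Fin.castSucc)) (n - m + 1)
        rw [← hr]
        apply Finset.sum_congr rfl
        intro k hk
        rw [Finset.mem_range] at hk
        have h1 : n - 1 - (m - 1 + k) = n - m + 1 - 1 - k := by omega
        have h2 : (if m - 1 + k < m - 1 then (0:ℂ)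
              else completeHomog m (m - 1 + k - (m-1)) (α ∘ Fin.castSucc)) =
            completeHomog m (n - m - (n - m + 1 - 1 - k)) (α ∘ Fin.castSucc) := by
          rw [if_neg (by omega)]
          congr 1
          omega
        rw [h1, h2]


/-- For pairwise distinct `α₁,…,α_m` and `n ≥ 0`, the sum
`∑_j α_j^n / ∏_{k≠j}(α_j−α_k)` equals `h_{n−m+1}(α)`, interpreted as `0` for `n < m−1`. -/
theorem power_sum_over_vandermonde (m : ℕ) (hm : 0 < m) (α : Fin m → ℂ)
    (hα : Function.Injective α) (n : ℕ) :
    ∑ j : Fin m,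
        α j ^ n / ∏ k ∈ (Finset.univ : Finset (Fin m)).erase j, (α j - α k) =
      if n < m - 1 then 0 else completeHomog m (n - (m - 1)) α :=
  main_aux m hm α hα n
end
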